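/- arXiv:2604.11318 — 4 statements merged into one kernel-verified Lean document; each statement's English description precedes it below -/
import Mathlib

section
/- Let H be a finite graph with no isolated vertices, let d ≥ 1 be an integer, and let Ḧ be the 2-subdivision of H. If a graph G contains a crude d-fat model of Ḧ, then G contains a d-fat model of H. -/
open Classical

noncomputable section

namespace CoarseSep

variable {V W : Type*}

/-- Total weight of a set of vertices. -/
def wSet (w : V → NNReal) (A : Set V) : NNReal := ∑ᶠ v ∈ A, w v

/-- `u` can be reached from `v` by a walk all of whose vertices avoid `S`. -/
def ReachAvoid (G : SimpleGraph V) (S : Set V) (u v : V) : Prop :=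
  ∃ p : G.Walk u v, ∀ x ∈ p.support, x ∉ S

/-- The vertex set of the connected component of `G - S` containing `v`. -/
def componentAvoiding (G : SimpleGraph V) (S : Set V) (v : V) : Set V :=
  {u | ReachAvoid G S u v}

/-- `S` is a balanced separator of the weighted graph `(G, w)`: every connected
component of `G - S` has weight at most half the total weight. -/
def IsBalancedSeparator (G : SimpleGraph V) (w : V → NNReal) (S : Set V) : Prop :=
  ∀ v : V, v ∉ S → wSet w (componentAvoiding G S v) ≤ wSet w Set.univ / 2

/-- `S` is `(k, r)`-coverable in `G`: it is covered by at most `k` balls of radius `r`. -/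
def Coverable (G : SimpleGraph V) (S : Set V) (k : ℕ) (r : ℕ) : Prop :=
  ∃ X : Finset V, X.card ≤ k ∧ ∀ s ∈ S, ∃ x ∈ X, G.edist s x ≤ r

/-- `(k, r)`-coverability with a real number `k` of balls of radius `r`. -/
def CoverableR (G : SimpleGraph V) (S : Set V) (k : ℝ) (r : ℕ) : Prop :=
  ∃ X : Finset V, (X.card : ℝ) ≤ k ∧ ∀ s ∈ S, ∃ x ∈ X, G.edist s x ≤ r

/-- The sets `A` and `B` are at distance at least `d` in `G`. -/
def FarApart (G : SimpleGraph V) (A B : Set V) (d : ℕ) : Prop :=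
  ∀ a ∈ A, ∀ b ∈ B, (d : ℕ∞) ≤ G.edist a b

/-- `G` contains `H` as a `d`-fat minor. -/
def HasFatMinor (G : SimpleGraph V) (H : SimpleGraph W) (d : ℕ) : Prop :=
  ∃ (Bv : W → G.Subgraph) (Be : H.edgeSet → G.Subgraph),
    (∀ u, (Bv u).Connected) ∧
    (∀ e, (Be e).Connected) ∧
    (∀ (u : W) (e : H.edgeSet), u ∈ (e : Sym2 W) → ((Bv u).verts ∩ (Be e).verts).Nonempty) ∧
    (∀ u u' : W, u ≠ u' → FarApart G (Bv u).verts (Bv u').verts d) ∧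
    (∀ (u : W) (e : H.edgeSet), u ∉ (e : Sym2 W) → FarApart G (Bv u).verts (Be e).verts d) ∧
    (∀ e e' : H.edgeSet, e ≠ e' → FarApart G (Be e).verts (Be e').verts d)

/-- `H` is an induced minor of `G`. -/
def IsInducedMinor (H : SimpleGraph W) (G : SimpleGraph V) : Prop :=
  ∃ B : W → G.Subgraph,
    (∀ u, (B u).Connected) ∧
    (Pairwise fun u v => Disjoint (B u).verts (B v).verts) ∧
    (∀ u v : W, u ≠ v →
      (H.Adj u v ↔ ∃ a ∈ (B u).verts, ∃ b ∈ (B v).verts, G.Adj a b))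

/-- `H` is a minor of `G`. -/
def IsMinor (H : SimpleGraph W) (G : SimpleGraph V) : Prop :=
  ∃ B : W → G.Subgraph,
    (∀ u, (B u).Connected) ∧
    (Pairwise fun u v => Disjoint (B u).verts (B v).verts) ∧
    (∀ u v : W, H.Adj u v → ∃ a ∈ (B u).verts, ∃ b ∈ (B v).verts, G.Adj a b)

/-- The `d`-th power of `G`. -/
def power (G : SimpleGraph V) (d : ℕ) : SimpleGraph V where
  Adj u v := u ≠ v ∧ G.edist u v ≤ d
  symm := by
    constructor
    intro u v ⟨h1, h2⟩
    exact ⟨h1.symm, by rwa [SimpleGraph.edist_comm]⟩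
  loopless := ⟨fun u ⟨h, _⟩ => h rfl⟩

/-- `𝒳` is a connected partition of `G`. -/
def IsConnectedPartition (G : SimpleGraph V) (𝒳 : Set (Set V)) : Prop :=
  (∀ X ∈ 𝒳, X.Nonempty) ∧
  (⋃₀ 𝒳 = Set.univ) ∧
  (∀ X ∈ 𝒳, ∀ Y ∈ 𝒳, X ≠ Y → Disjoint X Y) ∧
  (∀ X ∈ 𝒳, (G.induce X).Connected)

/-- The quotient graph `G/𝒳`. -/
def quotientGraph (G : SimpleGraph V) (𝒳 : Set (Set V)) : SimpleGraph 𝒳 where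
  Adj X Y := X ≠ Y ∧ ∃ a ∈ (X : Set V), ∃ b ∈ (Y : Set V), G.Adj a b
  symm := by
    constructor
    rintro X Y ⟨hne, a, ha, b, hb, hab⟩
    exact ⟨hne.symm, b, hb, a, ha, hab.symm⟩
  loopless := ⟨fun X h => h.1 rfl⟩

/-- A concurrent flow: for every ordered pair of distinct vertices `u, v`,
the total flow over all `u`–`v` paths is `w u * w v`. -/
def IsConcurrentFlow (G : SimpleGraph V) (w : V → NNReal)
    (lam : ∀ u v : V, G.Path u v → NNReal) : Prop :=
  ∀ u v : V, u ≠ v → ∑ᶠ p : G.Path u v, lam u v p = w u * w v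

/-- The total amount of flow passing through the vertex `x`. -/
def flowAt (G : SimpleGraph V) (lam : ∀ u v : V, G.Path u v → NNReal) (x : V) : NNReal :=
  ∑ᶠ u : V, ∑ᶠ v : V, ∑ᶠ p : G.Path u v,
    if u ≠ v ∧ x ∈ (p : G.Walk u v).support then lam u v p else 0

/-- `(A, B)` is a separation of `G`. -/
def IsSeparation (G : SimpleGraph V) (A B : Set V) : Prop :=
  A ∪ B = Set.univ ∧ ∀ a ∈ A \ B, ∀ b ∈ B \ A, ¬ G.Adj a b

/-- `𝒳` is a star partition of `G`. -/
def IsStarPartition (G : SimpleGraph V) (𝒳 : Set (Set V)) : Prop :=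
  IsConnectedPartition G 𝒳 ∧ ∀ X ∈ 𝒳, ∃ v ∈ X, ∀ x ∈ X, x = v ∨ G.Adj v x

/-- The 2-subdivision of `H`: every edge is replaced by a path of length 3,
with one new vertex for each dart of `H`. -/
def twoSubdivision (H : SimpleGraph W) : SimpleGraph (W ⊕ H.Dart) where
  Adj x y :=
    match x, y with
    | .inl _, .inl _ => False
    | .inl u, .inr d => d.fst = u
    | .inr d, .inl u => d.fst = u
    | .inr d, .inr d' => d' = d.symm
  symm := by
    constructor
    rintro (u | d) (v | d') h
    · exact h.elim
    · exact h
    · exact h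
    · simp only at h ⊢
      subst h
      exact (SimpleGraph.Dart.symm_symm d).symm
  loopless := by
    constructor
    rintro (u | d) h
    · exact h
    · exact SimpleGraph.Dart.symm_ne d h.symm

/-- `G` contains a crude `d`-fat model of `H`. -/
def HasCrudeFatModel (G : SimpleGraph V) (H : SimpleGraph W) (d : ℕ) : Prop :=
  ∃ (φ : W → V) (π : ∀ u v : W, H.Adj u v → G.Walk (φ u) (φ v)),
    (∀ u v (h : H.Adj u v), (π u v h).IsPath) ∧
    (∀ u v u' v' (h : H.Adj u v) (h' : H.Adj u' v'),
      u ≠ u' → u ≠ v' → v ≠ u' → v ≠ v' →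
      FarApart G {x | x ∈ (π u v h).support} {x | x ∈ (π u' v' h').support} d)

end CoarseSep

/-! The branch set of a vertex `u` of `H` is the union of the model paths from `u` to the
subdivision vertices next to it; the branch set of an edge is the model path joining its two
subdivision vertices. Each pair of branch sets that a fat model must keep apart consists of
unions of model paths of edges of the 2-subdivision without common endpoints, so they are at
distance at least `d`. -/

namespace SimpleGraph.Subgraph

variable {V ι : Type*} {G : SimpleGraph V}

lemma connected_iSup_of_mem [Nonempty ι] {F : ι → G.Subgraph} {v : V}
    (hF : ∀ i, (F i).Preconnected) (hv : ∀ i, v ∈ (F i).verts) : (⨆ i, F i).Connected := by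
  rw [Subgraph.connected_iff', connected_iff_exists_forall_reachable]
  obtain ⟨i₀⟩ := ‹Nonempty ι›
  refine ⟨⟨v, by rw [verts_iSup]; exact Set.mem_iUnion.2 ⟨i₀, hv i₀⟩⟩, ?_⟩
  rintro ⟨x, hx⟩
  rw [verts_iSup] at hx
  obtain ⟨i, hxi⟩ := Set.mem_iUnion.1 hx
  exact Reachable.map (inclusion (le_iSup F i)) (hF i ⟨v, hv i⟩ ⟨x, hxi⟩)

end SimpleGraph.Subgraph

namespace CoarseSep

open SimpleGraph

section FarApart

variable {V ι : Type*} {G : SimpleGraph V} {d : ℕ}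

lemma farApart_iUnion_left {A : ι → Set V} {B : Set V} :
    FarApart G (⋃ i, A i) B d ↔ ∀ i, FarApart G (A i) B d := by
  simp only [FarApart, Set.mem_iUnion, forall_exists_index]
  exact forall_comm

lemma farApart_iUnion_right {A : Set V} {B : ι → Set V} :
    FarApart G A (⋃ i, B i) d ↔ ∀ i, FarApart G A (B i) d := by
  simp only [FarApart, Set.mem_iUnion, forall_exists_index]
  exact ⟨fun h i a ha b hb => h a ha b i hb, fun h a ha b i hb => h i a ha b hb⟩

end FarApart

section Branch

variable {V W : Type*} {G : SimpleGraph V} {H : SimpleGraph W} {d : ℕ}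

/-- The distance condition of `HasCrudeFatModel`. -/
def PathsFarApart {K : SimpleGraph W} {φ : W → V} (π : ∀ u v, K.Adj u v → G.Walk (φ u) (φ v))
    (d : ℕ) : Prop :=
  ∀ u v u' v' (h : K.Adj u v) (h' : K.Adj u' v'), u ≠ u' → u ≠ v' → v ≠ u' → v ≠ v' →
    FarApart G {x | x ∈ (π u v h).support} {x | x ∈ (π u' v' h').support} d

lemma twoSubdivision_adj_inl_inr (a : H.Dart) :
    (twoSubdivision H).Adj (.inl a.fst) (.inr a) := rfl

lemma twoSubdivision_adj_inr_symm (a : H.Dart) :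
    (twoSubdivision H).Adj (.inr a) (.inr a.symm) := rfl

lemma exists_dart_edge_eq (e : H.edgeSet) : ∃ a : H.Dart, a.edge = e := by
  obtain ⟨e, he⟩ := e
  induction e using Sym2.ind with
  | _ u v => exact ⟨⟨(u, v), he⟩, rfl⟩

variable {φ : W ⊕ H.Dart → V} (π : ∀ x y, (twoSubdivision H).Adj x y → G.Walk (φ x) (φ y))

def vertexBranch (u : W) : G.Subgraph :=
  ⨆ a : {a : H.Dart // a.fst = u}, (π _ _ (twoSubdivision_adj_inl_inr a.1)).toSubgraph

def edgeBranch (a : H.Dart) : G.Subgraph :=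
  (π _ _ (twoSubdivision_adj_inr_symm a)).toSubgraph

lemma vertexBranch_connected {u : W} (hu : ∃ v, H.Adj u v) : (vertexBranch π u).Connected := by
  obtain ⟨v, huv⟩ := hu
  have : Nonempty {a : H.Dart // a.fst = u} := ⟨⟨⟨(u, v), huv⟩, rfl⟩⟩
  refine Subgraph.connected_iSup_of_mem (fun a => (Walk.toSubgraph_connected _).preconnected)
    (v := φ (.inl u)) ?_
  rintro ⟨a, rfl⟩
  exact Walk.start_mem_verts_toSubgraph _

lemma edgeBranch_connected (a : H.Dart) : (edgeBranch π a).Connected :=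
  Walk.toSubgraph_connected _

lemma subdivisionVertex_mem_vertexBranch (a : H.Dart) :
    φ (.inr a) ∈ (vertexBranch π a.fst).verts := by
  rw [vertexBranch, Subgraph.verts_iSup]
  exact Set.mem_iUnion.2 ⟨⟨a, rfl⟩, Walk.end_mem_verts_toSubgraph _⟩

lemma vertexBranch_inter_edgeBranch_nonempty {u : W} {a : H.Dart} (hu : u ∈ a.edge) :
    ((vertexBranch π u).verts ∩ (edgeBranch π a).verts).Nonempty := by
  rcases Sym2.mem_iff.1 hu with rfl | rfl
  · exact ⟨_, subdivisionVertex_mem_vertexBranch π a, Walk.start_mem_verts_toSubgraph _⟩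
  · exact ⟨_, subdivisionVertex_mem_vertexBranch π a.symm, Walk.end_mem_verts_toSubgraph _⟩

variable {π}

lemma farApart_vertexBranch (hπ : PathsFarApart π d) {u u' : W} (hne : u ≠ u') :
    FarApart G (vertexBranch π u).verts (vertexBranch π u').verts d := by
  simp only [vertexBranch, Subgraph.verts_iSup, farApart_iUnion_left, farApart_iUnion_right,
    Walk.verts_toSubgraph]
  rintro ⟨a, rfl⟩ ⟨a', rfl⟩
  exact hπ _ _ _ _ _ _ (Sum.inl_injective.ne hne) Sum.inl_ne_inr Sum.inr_ne_inl
    (Sum.inr_injective.ne (ne_of_apply_ne (·.fst) hne))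

lemma farApart_vertexBranch_edgeBranch (hπ : PathsFarApart π d) {u : W} {a : H.Dart}
    (hu : u ∉ a.edge) : FarApart G (vertexBranch π u).verts (edgeBranch π a).verts d := by
  simp only [vertexBranch, edgeBranch, Subgraph.verts_iSup, farApart_iUnion_left,
    Walk.verts_toSubgraph]
  rintro ⟨b, rfl⟩
  refine hπ _ _ _ _ _ _ Sum.inl_ne_inr Sum.inl_ne_inr ?_ ?_ <;> refine Sum.inr_injective.ne ?_
  · exact ne_of_apply_ne (·.fst) fun h => hu (h ▸ Sym2.mem_mk_left _ _)
  · exact ne_of_apply_ne (·.fst) fun h => hu (h ▸ Sym2.mem_mk_right _ _)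

lemma farApart_edgeBranch (hπ : PathsFarApart π d) {a a' : H.Dart} (hne : a.edge ≠ a'.edge) :
    FarApart G (edgeBranch π a).verts (edgeBranch π a').verts d := by
  simp only [edgeBranch, Walk.verts_toSubgraph]
  refine hπ _ _ _ _ _ _ ?_ ?_ ?_ ?_ <;>
    exact Sum.inr_injective.ne (ne_of_apply_ne Dart.edge (by simpa only [Dart.edge_symm]))

end Branch

theorem crudeFatModel_to_fatModel_general (V W : Type)
    (G : SimpleGraph V) (H : SimpleGraph W) (d : ℕ)
    (hnoiso : ∀ u : W, ∃ v : W, H.Adj u v)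
    (h : HasCrudeFatModel G (twoSubdivision H) d) :
    HasFatMinor G H d := by
  obtain ⟨φ, π, -, hπ⟩ := h
  choose a ha using exists_dart_edge_eq (H := H)
  refine ⟨vertexBranch π, fun e => edgeBranch π (a e), fun u => vertexBranch_connected π (hnoiso u),
    fun e => edgeBranch_connected π (a e), ?_, fun u u' => farApart_vertexBranch hπ, ?_, ?_⟩
  · intro u e hu
    exact vertexBranch_inter_edgeBranch_nonempty π (by rwa [ha])
  · intro u e hu
    exact farApart_vertexBranch_edgeBranch hπ (by rwa [ha])
  · intro e e' hne
    exact farApart_edgeBranch hπ (by rwa [ha, ha, Ne, ← Subtype.ext_iff])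

/-- A crude d-fat model of the 2-subdivision yields a d-fat model. -/
theorem crudeFatModel_to_fatModel (V W : Type) [Fintype V] [Fintype W]
    (G : SimpleGraph V) (H : SimpleGraph W) (d : ℕ) (hd : 1 ≤ d)
    (hnoiso : ∀ u : W, ∃ v : W, H.Adj u v)
    (h : HasCrudeFatModel G (twoSubdivision H) d) :
    HasFatMinor G H d :=
  crudeFatModel_to_fatModel_general V W G H d hnoiso h

end CoarseSep
end
end

section
/- There is a universal constant C such that every n-vertex graph G with n ≥ 2 admits a star partition 𝒳 such that the quotient graph G/𝒳 has at most C · n^{4/3} · (log n)^{2/3} edges. -/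
open Classical

noncomputable section

namespace CoarseSep

variable {V W : Type*}

/-!
Greedily choose a set `S` dominating every vertex of degree at least `d`; a vertex whose closed
neighbourhood meets the most undominated vertices cuts their number by a factor `1 - (d + 1) / n`,
so `|S| (d + 1) ≤ n (log n + 1)`. Moving every vertex onto a neighbour in `S`, where it has one,
gives a star partition whose quotient edges come either from pairs of vertices of `S` (at most
`|S|²` of them) or from edges at an undominated, hence low-degree, vertex (at most `n d`).
Taking `d ≈ n^{1/3} (log n)^{2/3}` balances the two bounds.
-/

open scoped Finset

section Domination

variable [Fintype V] (G : SimpleGraph V)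

lemma card_filter_eq_or_adj (u : V) :
    #(Finset.univ.filter fun x => x = u ∨ G.Adj x u) = G.degree u + 1 := by
  have : (Finset.univ.filter fun x => x = u ∨ G.Adj x u) = insert u (G.neighborFinset u) := by
    ext x
    simp [G.adj_comm]
  rw [this, Finset.card_insert_of_notMem (by simp), G.card_neighborFinset_eq_degree]

lemma exists_card_mul_le_card_filter [Nonempty V] {d : ℕ} {U : Finset V}
    (hU : ∀ u ∈ U, d ≤ G.degree u) :
    ∃ x, (d + 1) * #U ≤ Fintype.card V * #(U.filter fun u => x = u ∨ G.Adj x u) := by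
  have hsum : ∑ _x : V, (d + 1) * #U ≤
      ∑ x : V, Fintype.card V * #(U.filter fun u => x = u ∨ G.Adj x u) := by
    rw [Finset.sum_const, Finset.card_univ, smul_eq_mul, ← Finset.mul_sum]
    gcongr
    calc (d + 1) * #U = ∑ _u ∈ U, (d + 1) := by rw [Finset.sum_const, smul_eq_mul, mul_comm]
      _ ≤ ∑ u ∈ U, #(Finset.univ.filter fun x => x = u ∨ G.Adj x u) :=
        Finset.sum_le_sum fun u hu => by rw [card_filter_eq_or_adj]; have := hU u hu; omega
      _ = _ := (Finset.sum_card_bipartiteAbove_eq_sum_card_bipartiteBelow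
          (r := fun x u => x = u ∨ G.Adj x u)).symm
  obtain ⟨x, -, hx⟩ := Finset.exists_le_of_sum_le Finset.univ_nonempty hsum
  exact ⟨x, hx⟩

lemma mul_log_add_le_mul_log {n a b c : ℝ} (hn : 0 < n) (ha : 0 < a) (hb : 0 < b)
    (h : n * a + c * b ≤ n * b) : n * Real.log a + c ≤ n * Real.log b := by
  have hab : Real.log (a / b) ≤ a / b - 1 := Real.log_le_sub_one_of_pos (by positivity)
  rw [Real.log_div ha.ne' hb.ne'] at hab
  have hc : n * (a / b) + c ≤ n := by
    rw [mul_div_assoc', div_add' _ _ _ hb.ne', div_le_iff₀ hb]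
    linarith
  nlinarith

/-- Each greedy step lowers `n log #U` by `d + 1`, by `mul_log_add_le_mul_log`. -/
theorem exists_dominating_card_mul_le (d : ℕ) (U : Finset V) (hU : ∀ u ∈ U, d ≤ G.degree u) :
    ∃ S : Finset V, (∀ u ∈ U, ∃ s ∈ S, s = u ∨ G.Adj s u) ∧
      (#S : ℝ) * (d + 1) ≤ Fintype.card V * (Real.log #U + 1) := by
  induction U using Finset.strongInduction with
  | H U ih =>
  rcases U.eq_empty_or_nonempty with rfl | ⟨u₀, hu₀⟩
  · exact ⟨∅, by simp, by simp⟩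
  have : Nonempty V := ⟨u₀⟩
  obtain ⟨x, hx⟩ := exists_card_mul_le_card_filter G hU
  set W := U.filter fun u => x = u ∨ G.Adj x u
  have hdn : (d + 1 : ℝ) ≤ Fintype.card V := by
    exact_mod_cast (hU u₀ hu₀).trans_lt (G.degree_lt_card_verts u₀)
  have hlogU : 0 ≤ Real.log #U := Real.log_natCast_nonneg _
  obtain ⟨S, hSdom, hScard⟩ : ∃ S : Finset V, (∀ u ∈ U \ W, ∃ s ∈ S, s = u ∨ G.Adj s u) ∧
      (#S : ℝ) * (d + 1) + (d + 1) ≤ Fintype.card V * (Real.log #U + 1) := by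
    rcases (U \ W).eq_empty_or_nonempty with hU' | hU'
    · refine ⟨∅, by simp [hU'], ?_⟩
      simp only [Finset.card_empty, Nat.cast_zero, zero_mul, zero_add]
      nlinarith
    have hWU : W ⊆ U := Finset.filter_subset _ _
    have hW : W.Nonempty := by
      rw [← Finset.card_pos]
      have : 0 < (d + 1) * #U := Nat.mul_pos d.succ_pos (Finset.card_pos.2 ⟨u₀, hu₀⟩)
      exact Nat.pos_of_mul_pos_left (this.trans_le hx)
    obtain ⟨S, hSdom, hScard⟩ := ih (U \ W) (Finset.sdiff_ssubset hWU hW)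
      fun u hu => hU u (Finset.mem_sdiff.1 hu).1
    have hshrink : (Fintype.card V * #(U \ W) + (d + 1) * #U : ℝ) ≤ Fintype.card V * #U := by
      have hUW : (#U : ℝ) = #(U \ W) + #W := by
        exact_mod_cast (Finset.card_sdiff_add_card_eq_card hWU).symm
      have hx' : ((d + 1) * #U : ℝ) ≤ Fintype.card V * #W := by exact_mod_cast hx
      linear_combination hx' - (Fintype.card V : ℝ) * hUW
    have hlog := mul_log_add_le_mul_log (by linarith) (by exact_mod_cast hU'.card_pos)
      (by exact_mod_cast hW.card_pos.trans_le (Finset.card_le_card hWU)) hshrink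
    exact ⟨S, hSdom, by linarith⟩
  refine ⟨insert x S, fun u hu => ?_, ?_⟩
  · by_cases huW : u ∈ W
    · exact ⟨x, Finset.mem_insert_self _ _, (Finset.mem_filter.1 huW).2⟩
    · obtain ⟨s, hs, hsu⟩ := hSdom u (Finset.mem_sdiff.2 ⟨hu, huW⟩)
      exact ⟨s, Finset.mem_insert_of_mem hs, hsu⟩
  · have : (#(insert x S) : ℝ) ≤ #S + 1 := by exact_mod_cast Finset.card_insert_le x S
    nlinarith

theorem exists_dominating_of_le_degree (d : ℕ) :
    ∃ S : Finset V, (∀ v, d ≤ G.degree v → ∃ s ∈ S, s = v ∨ G.Adj s v) ∧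
      (#S : ℝ) * (d + 1) ≤ Fintype.card V * (Real.log (Fintype.card V) + 1) := by
  set U := Finset.univ.filter fun v => d ≤ G.degree v
  obtain ⟨S, hSdom, hScard⟩ :=
    exists_dominating_card_mul_le G d U fun v hv => (Finset.mem_filter.1 hv).2
  refine ⟨S, fun v hv => hSdom v (by simp [U, hv]), hScard.trans ?_⟩
  have hlog : Real.log #U ≤ Real.log (Fintype.card V) := by
    rcases U.eq_empty_or_nonempty with hU | hU
    · simpa [hU] using Real.log_natCast_nonneg _
    · exact Real.log_le_log (by exact_mod_cast hU.card_pos) (by exact_mod_cast U.card_le_univ)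
  gcongr

end Domination

section StarPartition

variable (G : SimpleGraph V)

lemma induce_connected_of_star {X : Set V} {c : V} (hc : c ∈ X)
    (hX : ∀ x ∈ X, x = c ∨ G.Adj c x) : (G.induce X).Connected := by
  have : Nonempty X := ⟨⟨c, hc⟩⟩
  have hreach (x : X) : (G.induce X).Reachable x ⟨c, hc⟩ := by
    rcases hX x x.2 with h | h
    · obtain rfl : x = ⟨c, hc⟩ := Subtype.ext h
      rfl
    · exact SimpleGraph.Adj.reachable (G := G.induce X) h.symm
  exact ⟨fun x y => (hreach x).trans (hreach y).symm⟩

def fibers (f : V → V) : Set (Set V) := Set.range fun v => f ⁻¹' {f v}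

lemma isStarPartition_fibers {f : V → V} (hf : ∀ v, f v = v ∨ G.Adj (f v) v)
    (hff : ∀ v, f (f v) = f v) : IsStarPartition G (fibers f) := by
  have hstar : ∀ X ∈ fibers f, ∃ c ∈ X, ∀ x ∈ X, x = c ∨ G.Adj c x := by
    rintro _ ⟨v, rfl⟩
    refine ⟨f v, hff v, fun x hx => ?_⟩
    rw [Set.mem_preimage, Set.mem_singleton_iff] at hx
    rw [← hx]
    exact (hf x).imp Eq.symm id
  refine ⟨⟨?_, ?_, ?_, fun X hX => ?_⟩, hstar⟩
  · rintro _ ⟨v, rfl⟩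
    exact ⟨v, rfl⟩
  · exact Set.eq_univ_of_forall fun v => ⟨_, ⟨v, rfl⟩, rfl⟩
  · rintro _ ⟨u, rfl⟩ _ ⟨v, rfl⟩ hne
    exact Disjoint.preimage f (Set.disjoint_singleton.2 fun h => hne (by simp only [h]))
  · obtain ⟨c, hc, hcX⟩ := hstar X hX
    exact induce_connected_of_star G hc hcX

lemma card_edgeSet_quotientGraph_fibers_le [Fintype V] (f : V → V) :
    Nat.card (quotientGraph G (fibers f)).edgeSet ≤ #(G.edgeFinset.image (Sym2.map f)) := by
  choose c hc using fun X : fibers f => X.2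
  have hmem (X : fibers f) {a : V} (ha : a ∈ (X : Set V)) : f a = f (c X) := by
    rw [← hc X] at ha
    exact ha
  have hinj : Function.Injective fun X => f (c X) := fun X Y h =>
    Subtype.ext (by rw [← hc X, ← hc Y]; simp only at h ⊢; rw [h])
  have hmaps : ∀ e ∈ (quotientGraph G (fibers f)).edgeSet,
      Sym2.map (fun X => f (c X)) e ∈ G.edgeFinset.image (Sym2.map f) := by
    intro e he
    induction e using Sym2.ind with
    | _ X Y =>
    obtain ⟨-, a, ha, b, hb, hab⟩ := he
    exact Finset.mem_image.2 ⟨s(a, b), G.mem_edgeFinset.2 hab, by simp [hmem X ha, hmem Y hb]⟩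
  calc Nat.card (quotientGraph G (fibers f)).edgeSet
      ≤ Nat.card (G.edgeFinset.image (Sym2.map f)) :=
        Nat.card_le_card_of_injective (fun e => ⟨_, hmaps e.1 e.2⟩) fun e e' h =>
          Subtype.ext (Sym2.map.injective hinj (congrArg Subtype.val h))
    _ = _ := Nat.card_eq_finsetCard _

/-- An edge whose image under `f` is not a pair of vertices of `S` has an endpoint in `L`. -/
lemma card_image_map_edgeFinset_le [Fintype V] (f : V → V) (S L : Finset V)
    (hf : ∀ v, f v ∈ S ∨ v ∈ L) :
    #(G.edgeFinset.image (Sym2.map f)) ≤ #S * #S + ∑ v ∈ L, G.degree v := by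
  set E := L.biUnion fun v => G.incidenceFinset v
  have hinc {a b : V} (hab : s(a, b) ∈ G.edgeFinset) (hv : a ∈ L ∨ b ∈ L) :
      Sym2.map f s(a, b) ∈ E.image (Sym2.map f) := by
    refine Finset.mem_image_of_mem _ (Finset.mem_biUnion.2 ?_)
    rcases hv with hv | hv
    · exact ⟨a, hv, (G.mem_incidenceFinset _ _).2 ⟨G.mem_edgeFinset.1 hab, Sym2.mem_mk_left _ _⟩⟩
    · exact ⟨b, hv, (G.mem_incidenceFinset _ _).2 ⟨G.mem_edgeFinset.1 hab, Sym2.mem_mk_right _ _⟩⟩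
  have hsub : G.edgeFinset.image (Sym2.map f) ⊆
      (S ×ˢ S).image (fun p => s(p.1, p.2)) ∪ E.image (Sym2.map f) := by
    intro _ hx
    obtain ⟨e, he, rfl⟩ := Finset.mem_image.1 hx
    induction e using Sym2.ind with
    | _ a b =>
    rcases hf a, hf b with ⟨ha | ha, hb | hb⟩
    · exact Finset.mem_union_left _ (Finset.mem_image_of_mem _ (Finset.mem_product.2 ⟨ha, hb⟩))
    all_goals exact Finset.mem_union_right _ (hinc he (by tauto))
  calc #(G.edgeFinset.image (Sym2.map f))
      ≤ #((S ×ˢ S).image (fun p => s(p.1, p.2))) + #(E.image (Sym2.map f)) :=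
        (Finset.card_le_card hsub).trans (Finset.card_union_le _ _)
    _ ≤ #S * #S + ∑ v ∈ L, G.degree v := by
      gcongr
      · exact Finset.card_image_le.trans (Finset.card_product S S).le
      · refine Finset.card_image_le.trans (Finset.card_biUnion_le.trans_eq ?_)
        simp only [G.card_incidenceFinset_eq_degree]

def dominator (S : Finset V) (v : V) : V :=
  if v ∈ S then v else if h : ∃ s ∈ S, G.Adj s v then h.choose else v

variable (S : Finset V)

lemma dominator_of_mem {v : V} (hv : v ∈ S) : dominator G S v = v := if_pos hv

lemma dominator_eq_or_adj (v : V) : dominator G S v = v ∨ G.Adj (dominator G S v) v := by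
  unfold dominator
  split_ifs with hv h
  exacts [.inl rfl, .inr h.choose_spec.2, .inl rfl]

lemma dominator_mem_or_eq (v : V) : dominator G S v ∈ S ∨ dominator G S v = v := by
  unfold dominator
  split_ifs with hv h
  exacts [.inl hv, .inl h.choose_spec.1, .inr rfl]

lemma dominator_mem {v : V} (hv : ∃ s ∈ S, s = v ∨ G.Adj s v) : dominator G S v ∈ S := by
  unfold dominator
  split_ifs with hvS h
  · exact hvS
  · exact h.choose_spec.1
  · obtain ⟨s, hs, rfl | hsv⟩ := hv
    exacts [absurd hs hvS, absurd ⟨s, hs, hsv⟩ h]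

lemma dominator_dominator (v : V) : dominator G S (dominator G S v) = dominator G S v := by
  rcases dominator_mem_or_eq G S v with h | h
  · exact dominator_of_mem G S h
  · rw [h, h]

theorem exists_starPartition_card_edgeSet_le [Fintype V] (d : ℕ)
    (hS : ∀ v, d ≤ G.degree v → ∃ s ∈ S, s = v ∨ G.Adj s v) :
    ∃ 𝒳, IsStarPartition G 𝒳 ∧
      Nat.card (quotientGraph G 𝒳).edgeSet ≤ #S * #S + Fintype.card V * d := by
  refine ⟨fibers (dominator G S),
    isStarPartition_fibers G (dominator_eq_or_adj G S) (dominator_dominator G S), ?_⟩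
  set L := Finset.univ.filter fun v => G.degree v < d
  have hL (v : V) : dominator G S v ∈ S ∨ v ∈ L := by
    by_cases hv : d ≤ G.degree v
    · exact .inl (dominator_mem G S (hS v hv))
    · exact .inr (by simpa [L] using hv)
  calc Nat.card (quotientGraph G (fibers (dominator G S))).edgeSet
      ≤ #(G.edgeFinset.image (Sym2.map (dominator G S))) :=
        card_edgeSet_quotientGraph_fibers_le G _
    _ ≤ #S * #S + ∑ v ∈ L, G.degree v := card_image_map_edgeFinset_le G _ S L hL
    _ ≤ #S * #S + Fintype.card V * d := by
      gcongr
      calc ∑ v ∈ L, G.degree v ≤ #L * d :=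
            Finset.sum_le_card_nsmul _ _ _ fun v hv => (Finset.mem_filter.1 hv).2.le
        _ ≤ Fintype.card V * d := Nat.mul_le_mul_right _ L.card_le_univ

end StarPartition

/-- `(L + 1)² ≤ 7 L²` and `1 / 2 ≤ t` give `s² ≤ 7 n t` and `n d ≤ 3 n t`. -/
lemma mul_self_add_mul_le {n L t s d : ℝ} (hn : 2 ≤ n) (hL : 2 / 3 ≤ L) (ht : 0 ≤ t)
    (htnL : t ^ 3 = n * L ^ 2) (hs : 0 ≤ s) (hsd : s * (d + 1) ≤ n * (L + 1)) (htd : t ≤ d)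
    (hdt : d ≤ t + 1) : s * s + n * d ≤ 10 * (n * t) := by
  have ht2 : 1 / 2 ≤ t := by
    by_contra! h
    have : t ^ 3 < (1 / 2) ^ 3 := pow_lt_pow_left₀ h ht (by norm_num)
    nlinarith
  have hst : s * t ≤ n * (L + 1) := by nlinarith
  have hss : s * s * t ^ 2 ≤ 7 * (n * t) * t ^ 2 := by
    calc s * s * t ^ 2 = (s * t) ^ 2 := by ring
      _ ≤ (n * (L + 1)) ^ 2 := pow_le_pow_left₀ (by positivity) hst 2
      _ = n ^ 2 * (L + 1) ^ 2 := by ring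
      _ ≤ n ^ 2 * (7 * L ^ 2) := by gcongr; nlinarith
      _ = 7 * (n ^ 2 * L ^ 2) := by ring
      _ = 7 * (n * t) * t ^ 2 := by linear_combination (-7 * n) * htnL
  have hs2 := le_of_mul_le_mul_right hss (by positivity)
  nlinarith

/-- Star partitions with few quotient edges. -/
theorem starPartition_fewQuotientEdges :
    ∃ C : ℝ, 0 < C ∧
      ∀ (V : Type) [Fintype V] (G : SimpleGraph V), 2 ≤ Fintype.card V →
        ∃ 𝒳 : Set (Set V), IsStarPartition G 𝒳 ∧
          (Nat.card (quotientGraph G 𝒳).edgeSet : ℝ) ≤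
            C * (Fintype.card V : ℝ) ^ ((4 : ℝ) / 3) *
              Real.log (Fintype.card V) ^ ((2 : ℝ) / 3) := by
  refine ⟨10, by norm_num, fun V _ G hV => ?_⟩
  have hn : (2 : ℝ) ≤ Fintype.card V := by exact_mod_cast hV
  set n : ℝ := (Fintype.card V : ℝ) with hn_def
  set L := Real.log n
  have hL : 2 / 3 ≤ L := by linarith [Real.log_two_gt_d9, Real.log_le_log two_pos hn]
  set t := n ^ ((1 : ℝ) / 3) * L ^ ((2 : ℝ) / 3)
  have ht : 0 ≤ t := by positivity
  have ht3 : t ^ 3 = n * L ^ 2 := by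
    rw [mul_pow, ← Real.rpow_natCast, ← Real.rpow_natCast (L ^ _), ← Real.rpow_mul (by linarith),
      ← Real.rpow_mul (by linarith)]
    norm_num
  have hnt : n * t = n ^ ((4 : ℝ) / 3) * L ^ ((2 : ℝ) / 3) := by
    rw [← mul_assoc, show (4 : ℝ) / 3 = 1 + 1 / 3 by norm_num, Real.rpow_add (by linarith),
      Real.rpow_one]
  obtain ⟨S, hSdom, hScard⟩ := exists_dominating_of_le_degree G ⌈t⌉₊
  obtain ⟨𝒳, h𝒳, hcard⟩ := exists_starPartition_card_edgeSet_le G S ⌈t⌉₊ hSdom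
  refine ⟨𝒳, h𝒳, ?_⟩
  calc (Nat.card (quotientGraph G 𝒳).edgeSet : ℝ) ≤ (#S : ℝ) * #S + n * ⌈t⌉₊ := by
        rw [hn_def]
        exact_mod_cast hcard
    _ ≤ 10 * (n * t) := mul_self_add_mul_le hn hL ht ht3 (Nat.cast_nonneg _) hScard
        (Nat.le_ceil t) (Nat.ceil_lt_add_one ht).le
    _ = 10 * n ^ ((4 : ℝ) / 3) * L ^ ((2 : ℝ) / 3) := by rw [hnt, mul_assoc]

end CoarseSep
end
end

section
/- Let H be a finite graph, let d ≥ 1 be an integer, and let G be a graph. If G excludes H as a d-fat minor, then the d-th power graph G^d excludes H as a 3-fat minor. -/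
open Classical

noncomputable section

namespace CoarseSep

variable {V W : Type*}

/-!
A `3`-fat model of `H` in `G^d` becomes a `d`-fat model in `G` once every branch set `B` is
replaced by the union of all `G`-walks of length at most `d` between vertices of `B`. Vertices
adjacent in `G^d` are joined by such a walk, so connectivity survives, and every new vertex lies
within `d / 2` of `B`. Sets at distance at least `3` in `G^d` are more than `2d` apart in `G`, so
after this thickening they are still at distance at least `d`.
-/

open SimpleGraph

variable {G : SimpleGraph V} {d : ℕ}

theorem _root_.SimpleGraph.Walk.exists_two_mul_le_length_edist_le {u v x : V} (p : G.Walk u v)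
    (hx : x ∈ p.support) :
    ∃ n : ℕ, 2 * n ≤ p.length ∧ (G.edist u x ≤ n ∨ G.edist x v ≤ n) := by
  obtain ⟨q, r, rfl⟩ := Walk.mem_support_iff_exists_append.1 hx
  rw [Walk.length_append]
  rcases le_total q.length r.length with h | h
  · exact ⟨q.length, by omega, .inl q.edist_le⟩
  · exact ⟨r.length, by omega, .inr r.edist_le⟩

theorem _root_.SimpleGraph.exists_walk_length_le_of_edist_le {u v : V} {n : ℕ} (h : G.edist u v ≤ n) :
    ∃ p : G.Walk u v, p.length ≤ n := by
  obtain ⟨p, hp⟩ := exists_walk_of_edist_ne_top (ne_top_of_le_ne_top (ENat.natCast_ne_top n) h)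
  exact ⟨p, by exact_mod_cast hp ▸ h⟩

theorem _root_.SimpleGraph.Reachable.lift {G' : SimpleGraph W} (f : V → W)
    (hf : ∀ u v, G.Adj u v → G'.Reachable (f u) (f v)) {u v : V} (h : G.Reachable u v) :
    G'.Reachable (f u) (f v) := by
  rw [reachable_eq_reflTransGen] at hf h ⊢
  exact Relation.ReflTransGen.lift' f hf u v h

theorem _root_.SimpleGraph.Subgraph.reachable_of_toSubgraph_le {K : G.Subgraph} {a b x y : V}
    {p : G.Walk a b} (hp : p.toSubgraph ≤ K) (hx : x ∈ p.support) (hy : y ∈ p.support)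
    (hxK : x ∈ K.verts) (hyK : y ∈ K.verts) : K.coe.Reachable ⟨x, hxK⟩ ⟨y, hyK⟩ :=
  (p.toSubgraph_connected ⟨x, p.mem_verts_toSubgraph.2 hx⟩
    ⟨y, p.mem_verts_toSubgraph.2 hy⟩).map (Subgraph.inclusion hp)

theorem power_edist_le_one_of_edist_le {u v : V} (h : G.edist u v ≤ d) :
    (power G d).edist u v ≤ 1 := by
  rcases eq_or_ne u v with rfl | hne
  · simp
  · exact (edist_eq_one_iff_adj.2 (show (power G d).Adj u v from ⟨hne, h⟩)).le

theorem power_edist_le_of_edist_le_mul {u v : V} (k : ℕ) (h : G.edist u v ≤ (k * d : ℕ)) :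
    (power G d).edist u v ≤ k := by
  induction k generalizing u with
  | zero => simp_all [edist_eq_zero_iff]
  | succ k ih =>
    obtain ⟨p, hlen⟩ := exists_walk_length_le_of_edist_le h
    have h₁ : G.edist u (p.getVert d) ≤ d :=
      (p.take d).edist_le.trans (by rw [Walk.take_length]; exact_mod_cast min_le_left _ _)
    have h₂ : G.edist (p.getVert d) v ≤ (k * d : ℕ) :=
      (p.drop d).edist_le.trans (by rw [Walk.drop_length]; norm_cast; grind)
    calc (power G d).edist u v
        ≤ (power G d).edist u (p.getVert d) + (power G d).edist (p.getVert d) v :=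
          SimpleGraph.edist_triangle
      _ ≤ 1 + k := add_le_add (power_edist_le_one_of_edist_le h₁) (ih h₂)
      _ = (k + 1 : ℕ) := by push_cast; ring

def shortWalkUnion (G : SimpleGraph V) (d : ℕ) (S : Set V) : G.Subgraph :=
  ⨆ (a ∈ S) (b ∈ S) (p : G.Walk a b) (_ : p.length ≤ d), p.toSubgraph

variable {S T : Set V}

theorem toSubgraph_le_shortWalkUnion {a b : V} (ha : a ∈ S) (hb : b ∈ S) (p : G.Walk a b)
    (hp : p.length ≤ d) : p.toSubgraph ≤ shortWalkUnion G d S :=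
  le_iSup₂_of_le a ha <| le_iSup₂_of_le b hb <| le_iSup₂_of_le p hp le_rfl

theorem mem_shortWalkUnion_verts {x : V} :
    x ∈ (shortWalkUnion G d S).verts ↔
      ∃ a ∈ S, ∃ b ∈ S, ∃ p : G.Walk a b, p.length ≤ d ∧ x ∈ p.support := by
  simp [shortWalkUnion, Subgraph.verts_iSup]

theorem subset_shortWalkUnion_verts : S ⊆ (shortWalkUnion G d S).verts := fun a ha =>
  mem_shortWalkUnion_verts.2 ⟨a, ha, a, ha, .nil, Nat.zero_le d, Walk.start_mem_support _⟩

theorem shortWalkUnion_connected {B : (power G d).Subgraph} (hB : B.Connected) :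
    (shortWalkUnion G d B.verts).Connected := by
  set K := shortWalkUnion G d B.verts
  let ι : B.verts → K.verts := Set.inclusion subset_shortWalkUnion_verts
  have reachable_of_adj : ∀ a b, B.coe.Adj a b → K.coe.Reachable (ι a) (ι b) := by
    intro a b hab
    obtain ⟨p, hp⟩ := exists_walk_length_le_of_edist_le hab.adj_sub.2
    have hpK := toSubgraph_le_shortWalkUnion a.2 b.2 p hp
    exact Subgraph.reachable_of_toSubgraph_le hpK p.start_mem_support p.end_mem_support _ _
  have reachable_of_mem : ∀ x : K.verts, ∃ a, K.coe.Reachable x (ι a) := by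
    rintro ⟨x, hx⟩
    obtain ⟨a, ha, b, hb, p, hp, hxp⟩ := mem_shortWalkUnion_verts.1 hx
    exact ⟨⟨a, ha⟩, Subgraph.reachable_of_toSubgraph_le (toSubgraph_le_shortWalkUnion ha hb p hp)
      hxp p.start_mem_support _ _⟩
  refine Subgraph.connected_iff.2 ⟨⟨fun x y => ?_⟩, hB.nonempty.mono subset_shortWalkUnion_verts⟩
  obtain ⟨a, hxa⟩ := reachable_of_mem x
  obtain ⟨b, hyb⟩ := reachable_of_mem y
  exact hxa.trans (((hB a b).lift ι reachable_of_adj).trans hyb.symm)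

theorem exists_edist_le_of_mem_shortWalkUnion_verts {x : V}
    (hx : x ∈ (shortWalkUnion G d S).verts) : ∃ a ∈ S, ∃ n : ℕ, 2 * n ≤ d ∧ G.edist x a ≤ n := by
  obtain ⟨a, ha, b, hb, p, hp, hxp⟩ := mem_shortWalkUnion_verts.1 hx
  obtain ⟨n, hn, hxa | hxb⟩ := p.exists_two_mul_le_length_edist_le hxp
  · exact ⟨a, ha, n, hn.trans hp, edist_comm.trans_le hxa⟩
  · exact ⟨b, hb, n, hn.trans hp, hxb⟩

theorem FarApart.shortWalkUnion (h : FarApart (power G d) S T 3) :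
    FarApart G (shortWalkUnion G d S).verts (shortWalkUnion G d T).verts d := by
  intro x hx y hy
  obtain ⟨a, ha, n, hn, hxa⟩ := exists_edist_le_of_mem_shortWalkUnion_verts hx
  obtain ⟨b, hb, m, hm, hyb⟩ := exists_edist_le_of_mem_shortWalkUnion_verts hy
  by_contra! hxy
  obtain ⟨e, he⟩ := ENat.ne_top_iff_exists.1 hxy.ne_top
  rw [← he, Nat.cast_lt] at hxy
  have hab : G.edist a b ≤ (2 * d : ℕ) :=
    calc G.edist a b ≤ G.edist a x + G.edist x y + G.edist y b :=
          SimpleGraph.edist_triangle.trans (by gcongr; exact SimpleGraph.edist_triangle)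
      _ ≤ n + e + m := by rw [edist_comm, ← he]; gcongr
      _ ≤ (2 * d : ℕ) := by norm_cast; omega
  have := (h a ha b hb).trans (power_edist_le_of_edist_le_mul 2 hab)
  norm_num at this

theorem HasFatMinor.of_power {H : SimpleGraph W} (hF : HasFatMinor (power G d) H 3) :
    HasFatMinor G H d := by
  obtain ⟨Bv, Be, hBv, hBe, hmeet, hvv, hve, hee⟩ := hF
  exact ⟨fun u => shortWalkUnion G d (Bv u).verts, fun e => shortWalkUnion G d (Be e).verts,
    fun u => shortWalkUnion_connected (hBv u), fun e => shortWalkUnion_connected (hBe e),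
    fun u e hue => (hmeet u e hue).mono
      (Set.inter_subset_inter subset_shortWalkUnion_verts subset_shortWalkUnion_verts),
    fun u u' hne => (hvv u u' hne).shortWalkUnion, fun u e hue => (hve u e hue).shortWalkUnion,
    fun e e' hne => (hee e e' hne).shortWalkUnion⟩

theorem power_excludes_threeFatMinor_general (V W : Type)
    (G : SimpleGraph V) (H : SimpleGraph W) (d : ℕ)
    (h : ¬ HasFatMinor G H d) :
    ¬ HasFatMinor (power G d) H 3 :=
  fun hF => h hF.of_power

/-- If G excludes H as a d-fat minor, then G^d excludes H as a 3-fat minor. -/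
theorem power_excludes_threeFatMinor (V W : Type) [Fintype V] [Fintype W]
    (G : SimpleGraph V) (H : SimpleGraph W) (d : ℕ) (hd : 1 ≤ d)
    (h : ¬ HasFatMinor G H d) :
    ¬ HasFatMinor (power G d) H 3 :=
  power_excludes_threeFatMinor_general V W G H d h

end CoarseSep
end
end

section
/- Let G be a weighted graph, let 𝒳 be a connected partition of G, and regard the quotient graph G/𝒳 as a weighted graph with weight function w(X) := w_G(X) for X ∈ 𝒳. Let 𝒮 ⊆ 𝒳 be a balanced separator of G/𝒳 and suppose that every cluster X ∈ 𝒳 is (q, r)-coverable in G for some q, r ∈ ℕ. Then the union S := ⋃_{X ∈ 𝒮} X is a balanced separator of G that is (q·|𝒮|, r)-coverable in G. -/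
open Classical

noncomputable section

namespace CoarseSep

variable {V W : Type*}

/-!
A walk in `G` avoiding `S` passes only through clusters outside `𝒮`, and consecutive vertices
lie in equal or adjacent clusters, so it projects to a walk in `G/𝒳` avoiding `𝒮`. Hence every
component of `G - S` lies in the union of the clusters of one component of `G/𝒳 - 𝒮`, which has
the same weight as that component. Covering `S` takes the `q` centres of each of its `|𝒮|`
clusters.
-/

lemma wSet_mono (w : V → NNReal) {A B : Set V} (hB : B.Finite) (h : A ⊆ B) :
    wSet w A ≤ wSet w B := by
  unfold wSet
  rw [finsum_mem_eq_finite_toFinset_sum _ (hB.subset h), finsum_mem_eq_finite_toFinset_sum _ hB]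
  exact Finset.sum_le_sum_of_subset (Set.Finite.toFinset_subset_toFinset.mpr h)

lemma wSet_biUnion {ι : Type*} (w : V → NNReal) {Q : Set ι} {f : ι → Set V}
    (hQ : Q.Finite) (hf : ∀ i ∈ Q, (f i).Finite) (hdisj : Q.PairwiseDisjoint f) :
    wSet w (⋃ i ∈ Q, f i) = wSet (fun i => wSet w (f i)) Q :=
  finsum_mem_biUnion hdisj hQ hf

lemma Coverable.biUnion {ι : Type*} {G : SimpleGraph V} {Q : Set ι} {f : ι → Set V} {q r : ℕ}
    (hQ : Q.Finite) (hcov : ∀ i ∈ Q, Coverable G (f i) q r) :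
    Coverable G (⋃ i ∈ Q, f i) (q * Q.ncard) r := by
  choose! F hFcard hFcov using hcov
  refine ⟨hQ.toFinset.biUnion F, ?_, ?_⟩
  · calc (hQ.toFinset.biUnion F).card ≤ hQ.toFinset.card * q :=
          Finset.card_biUnion_le_card_mul _ _ _ fun i hi => hFcard i (hQ.mem_toFinset.mp hi)
      _ = q * Q.ncard := by rw [Set.ncard_eq_toFinset_card Q hQ, mul_comm]
  · simp only [Set.mem_iUnion]
    rintro s ⟨i, hi, hs⟩
    obtain ⟨x, hx, hsx⟩ := hFcov i hi s hs
    exact ⟨x, Finset.mem_biUnion.mpr ⟨i, hQ.mem_toFinset.mpr hi, hx⟩, hsx⟩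

namespace IsConnectedPartition

variable {G : SimpleGraph V} {𝒳 : Set (Set V)}

lemma exists_mem (h𝒳 : IsConnectedPartition G 𝒳) (v : V) : ∃ X : 𝒳, v ∈ (X : Set V) := by
  obtain ⟨X, hX, hv⟩ := Set.mem_sUnion.mp (h𝒳.2.1 ▸ Set.mem_univ v)
  exact ⟨⟨X, hX⟩, hv⟩

def cluster (h𝒳 : IsConnectedPartition G 𝒳) (v : V) : 𝒳 := (h𝒳.exists_mem v).choose

lemma mem_cluster (h𝒳 : IsConnectedPartition G 𝒳) (v : V) : v ∈ (h𝒳.cluster v : Set V) :=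
  (h𝒳.exists_mem v).choose_spec

lemma pairwise_disjoint (h𝒳 : IsConnectedPartition G 𝒳) :
    Pairwise fun X Y : 𝒳 => Disjoint (X : Set V) Y :=
  fun X Y hXY => h𝒳.2.2.1 X X.2 Y Y.2 (Subtype.coe_injective.ne hXY)

lemma eq_cluster_of_mem (h𝒳 : IsConnectedPartition G 𝒳) {v : V} {X : 𝒳}
    (hv : v ∈ (X : Set V)) : X = h𝒳.cluster v := by
  by_contra hne
  exact Set.disjoint_left.mp (h𝒳.pairwise_disjoint hne) hv (h𝒳.mem_cluster v)

lemma mem_biUnion_iff (h𝒳 : IsConnectedPartition G 𝒳) {𝒮 : Set 𝒳} {v : V} :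
    v ∈ ⋃ X ∈ 𝒮, (X : Set V) ↔ h𝒳.cluster v ∈ 𝒮 := by
  simp only [Set.mem_iUnion]
  constructor
  · rintro ⟨X, hX, hv⟩
    rwa [← h𝒳.eq_cluster_of_mem hv]
  · exact fun hv => ⟨_, hv, h𝒳.mem_cluster v⟩

lemma exists_quotient_walk (h𝒳 : IsConnectedPartition G 𝒳) {u v : V} (p : G.Walk u v) :
    ∃ P : (quotientGraph G 𝒳).Walk (h𝒳.cluster u) (h𝒳.cluster v),
      ∀ X ∈ P.support, ∃ x ∈ p.support, h𝒳.cluster x = X := by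
  induction p with
  | nil => exact ⟨.nil, by simp⟩
  | @cons u a v hadj p ih =>
    obtain ⟨P, hP⟩ := ih
    have hP' : ∀ X ∈ P.support, ∃ x ∈ (SimpleGraph.Walk.cons hadj p).support,
        h𝒳.cluster x = X :=
      fun X hX => (hP X hX).imp fun x hx => ⟨List.mem_cons_of_mem _ hx.1, hx.2⟩
    by_cases hua : h𝒳.cluster u = h𝒳.cluster a
    · exact ⟨P.copy hua.symm rfl, by rwa [SimpleGraph.Walk.support_copy]⟩
    · have hQadj : (quotientGraph G 𝒳).Adj (h𝒳.cluster u) (h𝒳.cluster a) :=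
        ⟨hua, u, h𝒳.mem_cluster u, a, h𝒳.mem_cluster a, hadj⟩
      refine ⟨.cons hQadj P, ?_⟩
      intro X hX
      rw [SimpleGraph.Walk.support_cons, List.mem_cons] at hX
      rcases hX with rfl | hX
      · exact ⟨u, p.support.mem_cons_self, rfl⟩
      · exact hP' X hX

lemma componentAvoiding_subset_biUnion (h𝒳 : IsConnectedPartition G 𝒳) (𝒮 : Set 𝒳)
    (v : V) :
    componentAvoiding G (⋃ X ∈ 𝒮, (X : Set V)) v ⊆
      ⋃ Y ∈ componentAvoiding (quotientGraph G 𝒳) 𝒮 (h𝒳.cluster v), (Y : Set V) := by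
  rintro u ⟨p, hp⟩
  obtain ⟨P, hP⟩ := h𝒳.exists_quotient_walk p
  refine Set.mem_biUnion ⟨P, fun X hX hX𝒮 => ?_⟩ (h𝒳.mem_cluster u)
  obtain ⟨x, hx, rfl⟩ := hP X hX
  exact hp x hx (h𝒳.mem_biUnion_iff.mpr hX𝒮)

lemma wSet_biUnion_eq [Finite V] (h𝒳 : IsConnectedPartition G 𝒳) (w : V → NNReal)
    (Q : Set 𝒳) :
    wSet w (⋃ Y ∈ Q, (Y : Set V)) = wSet (fun X : 𝒳 => wSet w X) Q :=
  wSet_biUnion w Q.toFinite (fun _ _ => Set.toFinite _) (h𝒳.pairwise_disjoint.set_pairwise Q)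

lemma wSet_quotient_univ [Finite V] (h𝒳 : IsConnectedPartition G 𝒳) (w : V → NNReal) :
    wSet (fun X : 𝒳 => wSet w X) Set.univ = wSet w Set.univ := by
  rw [← h𝒳.wSet_biUnion_eq, Set.biUnion_univ, ← Set.sUnion_eq_iUnion, h𝒳.2.1]

theorem isBalancedSeparator_biUnion [Finite V] (h𝒳 : IsConnectedPartition G 𝒳)
    {w : V → NNReal} {𝒮 : Set 𝒳}
    (hsep : IsBalancedSeparator (quotientGraph G 𝒳) (fun X => wSet w (X : Set V)) 𝒮) :
    IsBalancedSeparator G w (⋃ X ∈ 𝒮, (X : Set V)) := fun v hv =>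
  calc wSet w (componentAvoiding G (⋃ X ∈ 𝒮, (X : Set V)) v)
      ≤ wSet w (⋃ Y ∈ componentAvoiding (quotientGraph G 𝒳) 𝒮 (h𝒳.cluster v), (Y : Set V)) :=
        wSet_mono w (Set.toFinite _) (h𝒳.componentAvoiding_subset_biUnion 𝒮 v)
    _ = wSet (fun X : 𝒳 => wSet w X)
          (componentAvoiding (quotientGraph G 𝒳) 𝒮 (h𝒳.cluster v)) :=
        h𝒳.wSet_biUnion_eq w _
    _ ≤ wSet w Set.univ / 2 := by
        rw [← h𝒳.wSet_quotient_univ w]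
        exact hsep _ (mt h𝒳.mem_biUnion_iff.mpr hv)

end IsConnectedPartition

/-- Lifting a balanced separator through a connected partition. -/
theorem lift_separator_through_partition (V : Type) [Fintype V] (G : SimpleGraph V)
    (w : V → NNReal) (𝒳 : Set (Set V)) (h𝒳 : IsConnectedPartition G 𝒳)
    (𝒮 : Set 𝒳) (q r : ℕ)
    (hsep : IsBalancedSeparator (quotientGraph G 𝒳)
      (fun X => wSet w (X : Set V)) 𝒮)
    (hcov : ∀ X ∈ 𝒳, Coverable G X q r) :
    IsBalancedSeparator G w (⋃ X ∈ 𝒮, (X : Set V)) ∧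
      Coverable G (⋃ X ∈ 𝒮, (X : Set V)) (q * 𝒮.ncard) r :=
  ⟨h𝒳.isBalancedSeparator_biUnion hsep, Coverable.biUnion 𝒮.toFinite fun X _ => hcov X X.2⟩

end CoarseSep
end
end
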